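/- arXiv:1209.5569 — 4 statements merged into one kernel-verified Lean document; each statement's English description precedes it below -/
import Mathlib

section
/- Let C be a covering of a finite nonempty set U. For all X, Y in the fixed point set of neighborhoods P, both X ∪ Y ∈ P and X ∩ Y ∈ P; consequently (P, ⊆) is a lattice in which X ∨ Y = X ∪ Y and X ∧ Y = X ∩ Y. -/
open Set

variable {U : Type*}

/-- The neighborhood of `x` w.r.t. the covering `C`: the intersection of all
blocks of `C` containing `x`. -/
def nbhd (C : Set (Set U)) (x : U) : Set U := ⋂₀ {K | K ∈ C ∧ x ∈ K}

/-- The sixth-type lower approximation. -/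
def xL (C : Set (Set U)) (X : Set U) : Set U := {x | nbhd C x ⊆ X}

/-- The fixed point set of neighborhoods. -/
def pFix (C : Set (Set U)) : Set (Set U) := {X | xL C X = X}

lemma mem_nbhd_self (C : Set (Set U)) (x : U) : x ∈ nbhd C x :=
  fun _ hK => hK.2

lemma xL_subset (C : Set (Set U)) (X : Set U) : xL C X ⊆ X :=
  fun x hx => hx (mem_nbhd_self C x)

lemma mem_pFix_iff {C : Set (Set U)} {X : Set U} :
    X ∈ pFix C ↔ ∀ x ∈ X, nbhd C x ⊆ X :=
  ⟨fun hX x hx => (hX.symm ▸ hx : x ∈ xL C X),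
    fun h => (xL_subset C X).antisymm h⟩

lemma sUnion_mem_pFix {C : Set (Set U)} {S : Set (Set U)} (hS : S ⊆ pFix C) :
    ⋃₀ S ∈ pFix C := by
  refine mem_pFix_iff.2 fun x hx => ?_
  obtain ⟨X, hXS, hxX⟩ := mem_sUnion.1 hx
  exact (mem_pFix_iff.1 (hS hXS) x hxX).trans (subset_sUnion_of_mem hXS)

lemma sInter_mem_pFix {C : Set (Set U)} {S : Set (Set U)} (hS : S ⊆ pFix C) :
    ⋂₀ S ∈ pFix C :=
  mem_pFix_iff.2 fun x hx =>
    subset_sInter fun X hXS => mem_pFix_iff.1 (hS hXS) x (hx X hXS)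

lemma union_mem_pFix {C : Set (Set U)} {X Y : Set U} (hX : X ∈ pFix C) (hY : Y ∈ pFix C) :
    X ∪ Y ∈ pFix C :=
  sUnion_pair X Y ▸ sUnion_mem_pFix (pair_subset hX hY)

lemma inter_mem_pFix {C : Set (Set U)} {X Y : Set U} (hX : X ∈ pFix C) (hY : Y ∈ pFix C) :
    X ∩ Y ∈ pFix C :=
  sInter_pair X Y ▸ sInter_mem_pFix (pair_subset hX hY)

theorem stmt1_general (C : Set (Set U))
    (X Y : Set U) (hX : X ∈ pFix C) (hY : Y ∈ pFix C) :
    X ∪ Y ∈ pFix C ∧ X ∩ Y ∈ pFix C ∧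
    (X ⊆ X ∪ Y ∧ Y ⊆ X ∪ Y ∧ ∀ Z ∈ pFix C, X ⊆ Z → Y ⊆ Z → X ∪ Y ⊆ Z) ∧
    (X ∩ Y ⊆ X ∧ X ∩ Y ⊆ Y ∧ ∀ Z ∈ pFix C, Z ⊆ X → Z ⊆ Y → Z ⊆ X ∩ Y) :=
  ⟨union_mem_pFix hX hY, inter_mem_pFix hX hY,
    ⟨subset_union_left, subset_union_right, fun _ _ => union_subset⟩,
    ⟨inter_subset_left, inter_subset_right, fun _ _ => subset_inter⟩⟩

/-- `P` is closed under binary unions and intersections, and in the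
poset `(P, ⊆)` the union is the least upper bound and the intersection is the
greatest lower bound, so `(P, ⊆)` is a lattice with `X ∨ Y = X ∪ Y` and
`X ∧ Y = X ∩ Y`. -/
theorem stmt1 [Fintype U] [Nonempty U] (C : Set (Set U))
    (hne : ∀ K ∈ C, K.Nonempty) (hcov : ⋃₀ C = Set.univ)
    (X Y : Set U) (hX : X ∈ pFix C) (hY : Y ∈ pFix C) :
    X ∪ Y ∈ pFix C ∧ X ∩ Y ∈ pFix C ∧
    (X ⊆ X ∪ Y ∧ Y ⊆ X ∪ Y ∧ ∀ Z ∈ pFix C, X ⊆ Z → Y ⊆ Z → X ∪ Y ⊆ Z) ∧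
    (X ∩ Y ⊆ X ∧ X ∩ Y ⊆ Y ∧ ∀ Z ∈ pFix C, Z ⊆ X → Z ⊆ Y → Z ⊆ X ∩ Y) :=
  stmt1_general C X Y hX hY
end

section
/- Let C be a covering of a finite nonempty set U such that the family {N(x) | x ∈ U} of neighborhoods is a partition of U. Then for every X ∈ P one has XL(Xᶜ) = Xᶜ = ⋃_{x ∈ Xᶜ} N(x); consequently, writing X* = XL(Xᶜ), X** = XL((X*)ᶜ), X⁺ = ⋃_{x ∈ Xᶜ} N(x) and X⁺⁺ = ⋃_{x ∈ (X⁺)ᶜ} N(x), the Stone identities X* ∪ X** = U and X⁺ ∩ X⁺⁺ = ∅ hold, so (P, ⊆) is a double Stone algebra. -/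
open Set

variable {U : Type*}

/-- `⋃_{x ∈ Xᶜ} N(x)`, the dual pseudocomplement operation on `P`. -/
def nUc (C : Set (Set U)) (X : Set U) : Set U := ⋃ x ∈ Xᶜ, nbhd C x

lemma mem_nbhd_symm_of_partition {C : Set (Set U)}
    (hpart : ∀ x y : U, nbhd C x = nbhd C y ∨ nbhd C x ∩ nbhd C y = ∅)
    {x y : U} (hy : y ∈ nbhd C x) : x ∈ nbhd C y := by
  rcases hpart y x with h | h
  · exact h ▸ mem_nbhd_self C x
  · exact absurd (h.subset ⟨mem_nbhd_self C y, hy⟩) (notMem_empty y)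

lemma nUc_eq_compl_xL {C : Set (Set U)} (hsymm : ∀ x y : U, y ∈ nbhd C x → x ∈ nbhd C y)
    (X : Set U) : nUc C X = (xL C X)ᶜ := by
  ext y
  simp only [nUc, xL, mem_iUnion, mem_compl_iff, mem_ofPred_eq, subset_def, not_forall,
    exists_prop]
  exact ⟨fun ⟨x, hx, hy⟩ => ⟨x, hsymm x y hy, hx⟩, fun ⟨x, hx, hxX⟩ => ⟨x, hxX, hsymm y x hx⟩⟩

lemma compl_mem_pFix {C : Set (Set U)} (hsymm : ∀ x y : U, y ∈ nbhd C x → x ∈ nbhd C y)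
    {X : Set U} (hX : X ∈ pFix C) : Xᶜ ∈ pFix C := by
  refine (xL_subset C Xᶜ).antisymm fun x hx y hy hyX => hx ?_
  have hyX' : y ∈ xL C X := (hX : xL C X = X).symm ▸ hyX
  exact hyX' (hsymm x y hy)

theorem stmt8_general (C : Set (Set U))
    (hpart : ∀ x y : U, nbhd C x = nbhd C y ∨ nbhd C x ∩ nbhd C y = ∅)
    (X : Set U) (hX : X ∈ pFix C) :
    xL C Xᶜ = Xᶜ ∧ nUc C X = Xᶜ ∧
    xL C Xᶜ ∪ xL C (xL C Xᶜ)ᶜ = Set.univ ∧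
    nUc C X ∩ nUc C (nUc C X) = ∅ := by
  have hsymm : ∀ x y : U, y ∈ nbhd C x → x ∈ nbhd C y :=
    fun _ _ => mem_nbhd_symm_of_partition hpart
  have hfix : xL C X = X := hX
  have hfix_compl : xL C Xᶜ = Xᶜ := compl_mem_pFix hsymm hX
  have hdual : nUc C X = Xᶜ := by rw [nUc_eq_compl_xL hsymm, hfix]
  refine ⟨hfix_compl, hdual, ?_, ?_⟩
  · rw [hfix_compl, compl_compl, hfix, compl_union_self]
  · rw [hdual, nUc_eq_compl_xL hsymm, hfix_compl, compl_compl, compl_inter_self]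

/-- if the neighborhoods form a partition of `U`, then for every
`X ∈ P` one has `XL(Xᶜ) = Xᶜ = ⋃_{x ∈ Xᶜ} N(x)`, and the Stone identities
`X* ∪ X** = U` and `X⁺ ∩ X⁺⁺ = ∅` hold, so `(P, ⊆)` is a double Stone
algebra. -/
theorem stmt8 [Fintype U] [Nonempty U] (C : Set (Set U))
    (hne : ∀ K ∈ C, K.Nonempty) (hcov : ⋃₀ C = Set.univ)
    (hpart : ∀ x y : U, nbhd C x = nbhd C y ∨ nbhd C x ∩ nbhd C y = ∅)
    (X : Set U) (hX : X ∈ pFix C) :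
    xL C Xᶜ = Xᶜ ∧ nUc C X = Xᶜ ∧
    xL C Xᶜ ∪ xL C (xL C Xᶜ)ᶜ = Set.univ ∧
    nUc C X ∩ nUc C (nUc C X) = ∅ :=
  stmt8_general C hpart X hX
end

section
/- Let C be a covering of a finite nonempty set U. For all X, Y in the fixed point set of covering F, both X ∪ Y ∈ F and FL(X ∩ Y) ∈ F; consequently (F, ⊆) is a lattice in which X ∨ Y = X ∪ Y and X ∧ Y = FL(X ∩ Y). -/
open Set

variable {U : Type*}

/-- The first-type lower approximation w.r.t. the covering `C`. -/
def fL (C : Set (Set U)) (X : Set U) : Set U := ⋃₀ {K | K ∈ C ∧ K ⊆ X}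

/-- The fixed point set of covering. -/
def fFix (C : Set (Set U)) : Set (Set U) := {X | fL C X = X}

/-- `K` is reducible in `C` if it is a union of some sets in `C \ {K}`. -/
def covReducible (C : Set (Set U)) (K : Set U) : Prop := ∃ S ⊆ C \ {K}, K = ⋃₀ S

/-- The minimal description of `x`. -/
def md (C : Set (Set U)) (x : U) : Set (Set U) :=
  {K | K ∈ C ∧ x ∈ K ∧ ∀ S ∈ C, x ∈ S → S ⊆ K → S = K}

/-- `C` is unary if `|md x| = 1` for every `x`. -/
def isUnary (C : Set (Set U)) : Prop := ∀ x : U, ∃! K : Set U, K ∈ md C x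

/-- The join-irreducible elements of the lattice `(fFix C, ⊆)`. -/
def jIrr (C : Set (Set U)) : Set (Set U) :=
  {A | A ∈ fFix C ∧ ∀ X ∈ fFix C, ∀ Y ∈ fFix C, A = X ∪ Y → A = X ∨ A = Y}

/-! `fL C` is an interior operator on `Set U` (contained in its argument, monotone, idempotent),
so its fixed points are closed under unions, and `fL C (X ∩ Y)` is the largest fixed point
below `X ∩ Y`. -/

section LowerApproximation

variable (C : Set (Set U))

lemma fL_subset (X : Set U) : fL C X ⊆ X :=
  sUnion_subset fun _ hK => hK.2

lemma fL_mono {X Y : Set U} (h : X ⊆ Y) : fL C X ⊆ fL C Y :=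
  sUnion_mono fun _ hK => ⟨hK.1, hK.2.trans h⟩

lemma subset_fL_of_mem {K X : Set U} (hK : K ∈ C) (hKX : K ⊆ X) : K ⊆ fL C X :=
  subset_sUnion_of_mem ⟨hK, hKX⟩

lemma fL_mem_fFix (X : Set U) : fL C X ∈ fFix C :=
  (fL_subset C _).antisymm <| sUnion_subset fun _ hK =>
    subset_fL_of_mem C hK.1 (subset_fL_of_mem C hK.1 hK.2)

lemma union_mem_fFix {X Y : Set U} (hX : X ∈ fFix C) (hY : Y ∈ fFix C) : X ∪ Y ∈ fFix C := by
  refine (fL_subset C _).antisymm (union_subset ?_ ?_)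
  · exact hX.symm.subset.trans (fL_mono C subset_union_left)
  · exact hY.symm.subset.trans (fL_mono C subset_union_right)

lemma subset_fL_of_mem_fFix {Z X : Set U} (hZ : Z ∈ fFix C) (h : Z ⊆ X) : Z ⊆ fL C X :=
  hZ.symm.subset.trans (fL_mono C h)

end LowerApproximation

theorem stmt10_general (C : Set (Set U))
    (X Y : Set U) (hX : X ∈ fFix C) (hY : Y ∈ fFix C) :
    X ∪ Y ∈ fFix C ∧ fL C (X ∩ Y) ∈ fFix C ∧
    (X ⊆ X ∪ Y ∧ Y ⊆ X ∪ Y ∧ ∀ Z ∈ fFix C, X ⊆ Z → Y ⊆ Z → X ∪ Y ⊆ Z) ∧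
    (fL C (X ∩ Y) ⊆ X ∧ fL C (X ∩ Y) ⊆ Y ∧
      ∀ Z ∈ fFix C, Z ⊆ X → Z ⊆ Y → Z ⊆ fL C (X ∩ Y)) :=
  ⟨union_mem_fFix C hX hY, fL_mem_fFix C _,
    ⟨subset_union_left, subset_union_right, fun _ _ => union_subset⟩,
    (fL_subset C _).trans inter_subset_left, (fL_subset C _).trans inter_subset_right,
    fun _ hZ hZX hZY => subset_fL_of_mem_fFix C hZ (subset_inter hZX hZY)⟩

/-- `F` is closed under `X ∪ Y` and `FL(X ∩ Y)`, and in the poset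
`(F, ⊆)` the union is the least upper bound while `FL(X ∩ Y)` is the greatest
lower bound, so `(F, ⊆)` is a lattice with `X ∨ Y = X ∪ Y` and
`X ∧ Y = FL(X ∩ Y)`. -/
theorem stmt10 [Fintype U] [Nonempty U] (C : Set (Set U))
    (hne : ∀ K ∈ C, K.Nonempty) (hcov : ⋃₀ C = Set.univ)
    (X Y : Set U) (hX : X ∈ fFix C) (hY : Y ∈ fFix C) :
    X ∪ Y ∈ fFix C ∧ fL C (X ∩ Y) ∈ fFix C ∧
    (X ⊆ X ∪ Y ∧ Y ⊆ X ∪ Y ∧ ∀ Z ∈ fFix C, X ⊆ Z → Y ⊆ Z → X ∪ Y ⊆ Z) ∧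
    (fL C (X ∩ Y) ⊆ X ∧ fL C (X ∩ Y) ⊆ Y ∧
      ∀ Z ∈ fFix C, Z ⊆ X → Z ⊆ Y → Z ⊆ fL C (X ∩ Y)) :=
  stmt10_general C X Y hX hY
end

section
/- Let C be a covering of a finite nonempty set U and let K ∈ C be reducible in C. Then K is a join-reducible element of the lattice (F, ⊆): K ∈ F and there exist X, Y ∈ F with K = X ∪ Y, X ≠ K and Y ≠ K. -/
open Set

variable {U : Type*}

/-!
Write `K = ⋃ S` with `S ⊆ C \ {K}` finite, so every member of `S` is a proper subset of `K`.
Removing members of `S` one at a time, we reach a member `T` and a subfamily `S'` with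
`K = T ∪ ⋃ S'` but `⋃ S' ≠ K`. Every union of members of `C` is a fixed point of `FL`, so `T`
and `⋃ S'` witness that `K` is join-reducible in `F`.
-/

theorem Finset.exists_sup_eq_sup_ne_of_forall_lt {α : Type*} [SemilatticeSup α] [OrderBot α]
    {a : α} (ha : a ≠ ⊥) (s : Finset α) (hs : s.sup id = a) (hlt : ∀ b ∈ s, b < a) :
    ∃ b ∈ s, ∃ t ⊆ s, b ⊔ t.sup id = a ∧ t.sup id ≠ a := by
  classical
  induction s using Finset.induction_on with
  | empty => exact absurd hs.symm ha
  | insert b t _ ih =>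
    rw [Finset.sup_insert, id] at hs
    by_cases ht : t.sup id = a
    · obtain ⟨c, hc, t', ht', hsup, hne⟩ :=
        ih ht fun c hc => hlt c (Finset.mem_insert_of_mem hc)
      exact ⟨c, Finset.mem_insert_of_mem hc, t', ht'.trans (Finset.subset_insert b t), hsup, hne⟩
    · exact ⟨b, Finset.mem_insert_self b t, t, Finset.subset_insert b t, hs, ht⟩

lemma sUnion_mem_fFix {C S : Set (Set U)} (hS : S ⊆ C) : ⋃₀ S ∈ fFix C := by
  refine subset_antisymm ?_ ?_
  · rintro x ⟨T, ⟨-, hTS⟩, hxT⟩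
    exact hTS hxT
  · rintro x ⟨T, hT, hxT⟩
    exact ⟨T, ⟨hS hT, subset_sUnion_of_mem hT⟩, hxT⟩

lemma mem_fFix_of_mem {C : Set (Set U)} {K : Set U} (hK : K ∈ C) : K ∈ fFix C := by
  simpa using sUnion_mem_fFix (singleton_subset_iff.mpr hK)

theorem stmt12_general [Fintype U] (C : Set (Set U))
    (hne : ∀ K ∈ C, K.Nonempty)
    (K : Set U) (hK : K ∈ C) (hred : covReducible C K) :
    K ∈ fFix C ∧
    ∃ X ∈ fFix C, ∃ Y ∈ fFix C, K = X ∪ Y ∧ X ≠ K ∧ Y ≠ K := by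
  obtain ⟨S, hSC, hKS⟩ := hred
  set s := (toFinite S).toFinset
  have hs : s.sup id = K := by rw [Finset.sup_id_set_eq_sUnion, Finite.coe_toFinset, hKS]
  have hlt : ∀ T ∈ s, T < K := fun T hT => by
    rw [Finite.mem_toFinset] at hT
    exact ssubset_of_subset_of_ne (hKS ▸ subset_sUnion_of_mem hT) (hSC hT).2
  obtain ⟨T, hT, t, hts, hsup, hsup_ne⟩ :=
    s.exists_sup_eq_sup_ne_of_forall_lt (hne K hK).ne_empty hs hlt
  have htC : (t : Set (Set U)) ⊆ C := fun T' hT' =>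
    (hSC ((Finite.mem_toFinset _).mp (hts hT'))).1
  refine ⟨mem_fFix_of_mem hK, T, mem_fFix_of_mem (hSC ((Finite.mem_toFinset _).mp hT)).1,
    t.sup id, ?_, hsup.symm, (hlt T hT).ne, hsup_ne⟩
  rw [Finset.sup_id_set_eq_sUnion]
  exact sUnion_mem_fFix htC

/-- every reducible element `K` of `C` is a join-reducible
element of the lattice `(F, ⊆)`. -/
theorem stmt12 [Fintype U] [Nonempty U] (C : Set (Set U))
    (hne : ∀ K ∈ C, K.Nonempty) (hcov : ⋃₀ C = Set.univ)
    (K : Set U) (hK : K ∈ C) (hred : covReducible C K) :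
    K ∈ fFix C ∧
    ∃ X ∈ fFix C, ∃ Y ∈ fFix C, K = X ∪ Y ∧ X ≠ K ∧ Y ≠ K :=
  stmt12_general C hne K hK hred
end
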